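/- arXiv:2505.04919 — 2 statements merged into one kernel-verified Lean document; each statement's English description precedes it below -/
import Mathlib

section
/- If C ≤ D, then the maximum congruence on C equals the restriction to C of the maximum congruence on D, i.e., ⋈_C = (⋈_D)|_C; consequently the minimum quotient C/⋈_C is isomorphic to a suboptiongraph of D/⋈_D. -/
def OptPres {α β : Type} (OptC : α → Set α) (OptD : β → Set β) (f : α → β) : Prop :=
  ∀ p, OptD (f p) = f '' OptC p

def cls {α : Type} (θ : α → α → Prop) (p : α) : Set α := {x | θ p x}

def clsSet {α : Type} (θ : α → α → Prop) (S : Set α) : Set (Set α) := cls θ '' S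

def IsCong {α : Type} (Opt : α → Set α) (θ : α → α → Prop) : Prop :=
  Equivalence θ ∧ ∀ p q, θ p q → clsSet θ (Opt p) = clsSet θ (Opt q)

noncomputable def quotOpt {α : Type} (Opt : α → Set α) (θ : α → α → Prop) :
    Quot θ → Set (Quot θ) := fun c => Quot.mk θ '' Opt c.out

def bowtie {α : Type} (Opt : α → Set α) : α → α → Prop :=
  fun p q => ∃ θ, IsCong Opt θ ∧ θ p q

def subOpt {α : Type} (Opt : α → Set α) (C : Set α) : ↥C → Set ↥C :=
  fun p => {q | (q : α) ∈ Opt (p : α)}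

def IsSubOG {α : Type} (Opt : α → Set α) (C : Set α) : Prop :=
  ∀ p ∈ C, Opt p ⊆ C

/- ### Auxiliary lemmas -/

lemma cls_eq_iff {α : Type} {θ : α → α → Prop} (h : Equivalence θ) {a b : α} :
    cls θ a = cls θ b ↔ θ a b := by
  constructor
  · intro he
    have hb : b ∈ cls θ b := h.refl b
    rw [← he] at hb
    exact hb
  · intro hab
    ext x
    exact ⟨fun hx => h.trans (h.symm hab) hx, fun hx => h.trans hab hx⟩

lemma clsSet_eq_iff {α : Type} {θ : α → α → Prop} (h : Equivalence θ) {S T : Set α} :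
    clsSet θ S = clsSet θ T ↔
      (∀ a ∈ S, ∃ b ∈ T, θ a b) ∧ (∀ b ∈ T, ∃ a ∈ S, θ a b) := by
  constructor
  · intro he
    constructor
    · intro a ha
      have : cls θ a ∈ clsSet θ T := he ▸ Set.mem_image_of_mem _ ha
      obtain ⟨b, hb, hba⟩ := this
      exact ⟨b, hb, h.symm ((cls_eq_iff h).mp hba)⟩
    · intro b hb
      have : cls θ b ∈ clsSet θ S := he ▸ Set.mem_image_of_mem _ hb
      obtain ⟨a, ha, hab⟩ := this
      exact ⟨a, ha, (cls_eq_iff h).mp hab⟩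
  · rintro ⟨h1, h2⟩
    ext X
    constructor
    · rintro ⟨a, ha, rfl⟩
      obtain ⟨b, hb, hab⟩ := h1 a ha
      exact ⟨b, hb, ((cls_eq_iff h).mpr hab).symm⟩
    · rintro ⟨b, hb, rfl⟩
      obtain ⟨a, ha, hab⟩ := h2 b hb
      exact ⟨a, ha, (cls_eq_iff h).mpr hab⟩

lemma isCong_of_bisim {α : Type} {Opt : α → Set α} {θ : α → α → Prop}
    (h : Equivalence θ)
    (hb : ∀ p q, θ p q → ∀ a ∈ Opt p, ∃ b ∈ Opt q, θ a b) : IsCong Opt θ := by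
  refine ⟨h, fun p q hpq => (clsSet_eq_iff h).mpr ⟨hb p q hpq, ?_⟩⟩
  intro b hbq
  obtain ⟨a, ha, hab⟩ := hb q p (h.symm hpq) b hbq
  exact ⟨a, ha, h.symm hab⟩

lemma isCong_bisim {α : Type} {Opt : α → Set α} {θ : α → α → Prop}
    (h : IsCong Opt θ) : ∀ p q, θ p q → ∀ a ∈ Opt p, ∃ b ∈ Opt q, θ a b :=
  fun p q hpq => ((clsSet_eq_iff h.1).mp (h.2 p q hpq)).1

lemma isCong_eq {α : Type} (Opt : α → Set α) : IsCong Opt Eq :=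
  ⟨eq_equivalence, fun p q hpq => by rw [hpq]⟩

lemma bowtie_equivalence {α : Type} (Opt : α → Set α) : Equivalence (bowtie Opt) := by
  constructor
  · exact fun x => ⟨Eq, isCong_eq Opt, rfl⟩
  · rintro x y ⟨θ, hθ, hxy⟩
    exact ⟨θ, hθ, hθ.1.symm hxy⟩
  · rintro x y z ⟨θ₁, hθ₁, hxy⟩ ⟨θ₂, hθ₂, hyz⟩
    set r : α → α → Prop := fun a b => θ₁ a b ∨ θ₂ a b with hr
    set G := Relation.EqvGen r with hG
    have hGe : Equivalence G := Relation.EqvGen.is_equivalence r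
    have hbis : ∀ a b, G a b →
        (∀ x ∈ Opt a, ∃ y ∈ Opt b, G x y) ∧ (∀ y ∈ Opt b, ∃ x ∈ Opt a, G x y) := by
      intro a b hab
      induction hab with
      | rel a b hab =>
        rcases hab with hab | hab
        · refine ⟨fun x hx => ?_, fun y hy => ?_⟩
          · obtain ⟨y, hy, hxy⟩ := isCong_bisim hθ₁ a b hab x hx
            exact ⟨y, hy, Relation.EqvGen.rel _ _ (Or.inl hxy)⟩
          · obtain ⟨x, hx, hxy⟩ := isCong_bisim hθ₁ b a (hθ₁.1.symm hab) y hy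
            exact ⟨x, hx, hGe.symm (Relation.EqvGen.rel _ _ (Or.inl hxy))⟩
        · refine ⟨fun x hx => ?_, fun y hy => ?_⟩
          · obtain ⟨y, hy, hxy⟩ := isCong_bisim hθ₂ a b hab x hx
            exact ⟨y, hy, Relation.EqvGen.rel _ _ (Or.inr hxy)⟩
          · obtain ⟨x, hx, hxy⟩ := isCong_bisim hθ₂ b a (hθ₂.1.symm hab) y hy
            exact ⟨x, hx, hGe.symm (Relation.EqvGen.rel _ _ (Or.inr hxy))⟩
      | refl a => exact ⟨fun x hx => ⟨x, hx, hGe.refl x⟩, fun y hy => ⟨y, hy, hGe.refl y⟩⟩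
      | symm a b _ ih =>
        refine ⟨fun x hx => ?_, fun y hy => ?_⟩
        · obtain ⟨z, hz, h⟩ := ih.2 x hx
          exact ⟨z, hz, hGe.symm h⟩
        · obtain ⟨z, hz, h⟩ := ih.1 y hy
          exact ⟨z, hz, hGe.symm h⟩
      | trans a b c _ _ ih1 ih2 =>
        refine ⟨fun x hx => ?_, fun y hy => ?_⟩
        · obtain ⟨y, hy, hxy⟩ := ih1.1 x hx
          obtain ⟨z, hz, hyz⟩ := ih2.1 y hy
          exact ⟨z, hz, hGe.trans hxy hyz⟩
        · obtain ⟨y, hy, hxy⟩ := ih2.2 y hy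
          obtain ⟨x, hx, hxy'⟩ := ih1.2 y hy
          exact ⟨x, hx, hGe.trans hxy' hxy⟩
    have hGcong : IsCong Opt G := isCong_of_bisim hGe (fun p q hpq => (hbis p q hpq).1)
    exact ⟨G, hGcong,
      hGe.trans (Relation.EqvGen.rel _ _ (Or.inl hxy)) (Relation.EqvGen.rel _ _ (Or.inr hyz))⟩

lemma bowtie_isCong {α : Type} (Opt : α → Set α) : IsCong Opt (bowtie Opt) := by
  refine isCong_of_bisim (bowtie_equivalence Opt) ?_
  rintro p q ⟨θ, hθ, hpq⟩ a ha
  obtain ⟨b, hb, hab⟩ := isCong_bisim hθ p q hpq a ha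
  exact ⟨b, hb, θ, hθ, hab⟩

lemma bowtie_mk_eq {α : Type} (Opt : α → Set α) {a b : α} :
    Quot.mk (bowtie Opt) a = Quot.mk (bowtie Opt) b ↔ bowtie Opt a b := by
  rw [Quot.eq, (bowtie_equivalence Opt).eqvGen_iff]

lemma optPres_symm {α β : Type} {OptA : α → Set α} {OptB : β → Set β} (e : α ≃ β)
    (h : OptPres OptA OptB e) : OptPres OptB OptA e.symm := by
  intro p
  have h1 := h (e.symm p)
  rw [Equiv.apply_symm_apply] at h1
  rw [h1, Equiv.symm_image_image]

lemma bowtie_restrict {α : Type} (Opt : α → Set α) (C : Set α) (hC : IsSubOG Opt C)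
    (p q : ↥C) : bowtie (subOpt Opt C) p q ↔ bowtie Opt p q := by
  constructor
  · rintro ⟨θ, hθ, hpq⟩
    set θ' : α → α → Prop :=
      fun x y => x = y ∨ ∃ hx : x ∈ C, ∃ hy : y ∈ C, θ ⟨x, hx⟩ ⟨y, hy⟩ with hθ'def
    have hθ'e : Equivalence θ' := by
      constructor
      · exact fun x => Or.inl rfl
      · rintro x y (rfl | ⟨hx, hy, hxy⟩)
        · exact Or.inl rfl
        · exact Or.inr ⟨hy, hx, hθ.1.symm hxy⟩
      · rintro x y z (rfl | ⟨hx, hy, hxy⟩) hyz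
        · exact hyz
        · rcases hyz with rfl | ⟨hy', hz, hyz⟩
          · exact Or.inr ⟨hx, hy, hxy⟩
          · exact Or.inr ⟨hx, hz, hθ.1.trans hxy hyz⟩
    refine ⟨θ', isCong_of_bisim hθ'e ?_, Or.inr ⟨p.2, q.2, hpq⟩⟩
    rintro x y (rfl | ⟨hx, hy, hxy⟩) a ha
    · exact ⟨a, ha, Or.inl rfl⟩
    · have haC : a ∈ C := hC x hx ha
      obtain ⟨b, hb, hab⟩ := isCong_bisim hθ ⟨x, hx⟩ ⟨y, hy⟩ hxy ⟨a, haC⟩ ha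
      exact ⟨(b : α), hb, Or.inr ⟨haC, b.2, hab⟩⟩
  · rintro ⟨θ, hθ, hpq⟩
    have hE : Equivalence (fun a b : ↥C => θ (a : α) (b : α)) :=
      ⟨fun x => hθ.1.refl _, fun h => hθ.1.symm h, fun h1 h2 => hθ.1.trans h1 h2⟩
    refine ⟨fun a b : ↥C => θ (a : α) (b : α), isCong_of_bisim hE ?_, hpq⟩
    rintro u v huv a ha
    obtain ⟨b, hb, hab⟩ := isCong_bisim hθ (u : α) (v : α) huv (a : α) ha
    exact ⟨⟨b, hC v v.2 hb⟩, hb, hab⟩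

noncomputable def qmap {α : Type} (Opt : α → Set α) (C : Set α) (hC : IsSubOG Opt C) :
    Quot (bowtie (subOpt Opt C)) → ↥(Set.range fun x : ↥C => Quot.mk (bowtie Opt) (x : α)) :=
  Quot.lift (fun u : ↥C => ⟨Quot.mk (bowtie Opt) (u : α), ⟨u, rfl⟩⟩)
    (fun u v huv =>
      Subtype.ext ((bowtie_mk_eq Opt).mpr ((bowtie_restrict Opt C hC u v).mp huv)))

lemma qmap_bijective {α : Type} (Opt : α → Set α) (C : Set α) (hC : IsSubOG Opt C) :
    Function.Bijective (qmap Opt C hC) := by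
  constructor
  · intro x y
    induction x using Quot.ind with | _ u =>
    induction y using Quot.ind with | _ v =>
    intro hxy
    have h1 : Quot.mk (bowtie Opt) (u : α) = Quot.mk (bowtie Opt) (v : α) :=
      congrArg Subtype.val hxy
    exact Quot.sound ((bowtie_restrict Opt C hC u v).mpr ((bowtie_mk_eq Opt).mp h1))
  · rintro ⟨s, x, rfl⟩
    exact ⟨Quot.mk _ x, rfl⟩

theorem stmt10 {α : Type} [Nonempty α] (Opt : α → Set α) (C : Set α)
    (hC : IsSubOG Opt C) :
    (∀ p q : ↥C, bowtie (subOpt Opt C) p q ↔ bowtie Opt p q) ∧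
    ∃ S : Set (Quot (bowtie Opt)),
      IsSubOG (quotOpt Opt (bowtie Opt)) S ∧
      ∃ e : Quot (bowtie (subOpt Opt C)) ≃ ↥S,
        OptPres (quotOpt (subOpt Opt C) (bowtie (subOpt Opt C)))
          (subOpt (quotOpt Opt (bowtie Opt)) S) e ∧
        OptPres (subOpt (quotOpt Opt (bowtie Opt)) S)
          (quotOpt (subOpt Opt C) (bowtie (subOpt Opt C))) e.symm := by
  have hbe := bowtie_equivalence Opt
  have hrestr := bowtie_restrict Opt C hC
  refine ⟨hrestr, ?_⟩
  have hbij := qmap_bijective Opt C hC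
  set e : Quot (bowtie (subOpt Opt C)) ≃
      ↥(Set.range fun x : ↥C => Quot.mk (bowtie Opt) (x : α)) :=
    Equiv.ofBijective (qmap Opt C hC) hbij with hedef
  have happ : ∀ u : ↥C, e (Quot.mk (bowtie (subOpt Opt C)) u) =
      ⟨Quot.mk (bowtie Opt) (u : α), ⟨u, rfl⟩⟩ := fun u => by
    rw [hedef]; rfl
  have hfor : OptPres (quotOpt (subOpt Opt C) (bowtie (subOpt Opt C)))
      (subOpt (quotOpt Opt (bowtie Opt))
        (Set.range fun x : ↥C => Quot.mk (bowtie Opt) (x : α))) e := by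
    intro p
    induction p using Quot.ind with | _ u =>
    rw [happ u]
    have hvu : bowtie Opt (((Quot.mk (bowtie (subOpt Opt C)) u).out : ↥C) : α) (u : α) :=
      (hrestr _ u).mp ((bowtie_mk_eq (subOpt Opt C)).mp (Quot.out_eq _))
    have hwu : bowtie Opt (Quot.mk (bowtie Opt) (u : α)).out (u : α) :=
      (bowtie_mk_eq Opt).mp (Quot.out_eq _)
    have hwv : bowtie Opt (Quot.mk (bowtie Opt) (u : α)).out
        (((Quot.mk (bowtie (subOpt Opt C)) u).out : ↥C) : α) :=
      hbe.trans hwu (hbe.symm hvu)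
    ext q
    simp only [subOpt, quotOpt, Set.mem_setOf_eq]
    constructor
    · rintro ⟨a, ha, hq⟩
      obtain ⟨b, hb, hab⟩ := isCong_bisim (bowtie_isCong Opt) _ _ hwv a ha
      have hbC : b ∈ C := hC _ ((Quot.mk (bowtie (subOpt Opt C)) u).out).2 hb
      refine ⟨Quot.mk _ (⟨b, hbC⟩ : ↥C), ⟨(⟨b, hbC⟩ : ↥C), hb, rfl⟩, ?_⟩
      rw [happ]
      apply Subtype.ext
      show Quot.mk (bowtie Opt) b = (q : Quot (bowtie Opt))
      rw [← hq]
      exact (bowtie_mk_eq Opt).mpr (hbe.symm hab)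
    · rintro ⟨x, ⟨b, hb, rfl⟩, rfl⟩
      obtain ⟨a, ha, hab⟩ :=
        isCong_bisim (bowtie_isCong Opt) _ _ (hbe.symm hwv) (b : α) hb
      refine ⟨a, ha, ?_⟩
      rw [happ]
      exact (bowtie_mk_eq Opt).mpr (hbe.symm hab)
  exact ⟨Set.range fun x : ↥C => Quot.mk (bowtie Opt) (x : α), by
    rintro c ⟨x, rfl⟩ d ⟨a, ha, rfl⟩
    have hout : bowtie Opt (Quot.mk (bowtie Opt) (x : α)).out (x : α) :=
      (bowtie_mk_eq Opt).mp (Quot.out_eq _)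
    obtain ⟨b, hb, hab⟩ := isCong_bisim (bowtie_isCong Opt) _ _ hout a ha
    exact ⟨⟨b, hC x x.2 hb⟩, ((bowtie_mk_eq Opt).mpr hab).symm⟩,
    e, hfor, optPres_symm e hfor⟩
end

section
/- If θ is a congruence on an optiongraph D, then the minimum quotient of D is isomorphic to the minimum quotient of D/θ, i.e., D/⋈_D ≅ (D/θ)/⋈_{D/θ}. -/
section aux

variable {α : Type}

lemma cls_eq_of_rel {η : α → α → Prop} (h : Equivalence η) {x y : α} (hxy : η x y) :
    cls η x = cls η y := by
  ext z
  exact ⟨fun hz => h.trans (h.symm hxy) hz, fun hz => h.trans hxy hz⟩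

lemma transfer_sub {β : Type*} {η : α → α → Prop} (hrefl : ∀ x, η x x)
    {F : α → β} (hF : ∀ x y, η x y → F x = F y)
    {S T : Set α} (hST : cls η '' S ⊆ cls η '' T) : F '' S ⊆ F '' T := by
  rintro _ ⟨x, hx, rfl⟩
  obtain ⟨y, hy, hc⟩ := hST ⟨x, hx, rfl⟩
  have hxy : η x y := by
    have : y ∈ cls η y := hrefl y
    rw [hc] at this
    exact this
  exact ⟨y, hy, (hF x y hxy).symm⟩

lemma transfer {β : Type*} {η : α → α → Prop} (hrefl : ∀ x, η x x)
    {F : α → β} (hF : ∀ x y, η x y → F x = F y)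
    {S T : Set α} (hST : cls η '' S = cls η '' T) : F '' S = F '' T :=
  Set.Subset.antisymm (transfer_sub hrefl hF hST.le) (transfer_sub hrefl hF hST.ge)

lemma bowtie_refl (Opt : α → Set α) (p : α) : bowtie Opt p p :=
  ⟨Eq, ⟨eq_equivalence, fun p q h => by rw [h]⟩, rfl⟩

lemma mk_img_eq (Opt : α → Set α) {u v : α} (h : bowtie Opt u v) :
    Quot.mk (bowtie Opt) '' Opt u = Quot.mk (bowtie Opt) '' Opt v := by
  obtain ⟨η, hη, huv⟩ := h
  exact transfer hη.1.refl (fun x y hxy => Quot.sound ⟨η, hη, hxy⟩) (hη.2 u v huv)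

lemma mk_img_eq' (Opt : α → Set α) {u v : α} (h : Relation.EqvGen (bowtie Opt) u v) :
    Quot.mk (bowtie Opt) '' Opt u = Quot.mk (bowtie Opt) '' Opt v := by
  induction h with
  | rel _ _ hr => exact mk_img_eq Opt hr
  | refl => rfl
  | symm _ _ _ ih => exact ih.symm
  | trans _ _ _ _ _ ih1 ih2 => exact ih1.trans ih2

lemma out_rel (θ : α → α → Prop) (hθeq : Equivalence θ) (a : α) : θ (Quot.mk θ a).out a :=
  (Equivalence.eqvGen_iff hθeq).mp (Quot.eq.mp (Quot.out_eq (Quot.mk θ a)))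

lemma theta_le (Opt : α → Set α) (θ : α → α → Prop) (hθ : IsCong Opt θ)
    {x y : α} (h : θ x y) : bowtie Opt x y := ⟨θ, hθ, h⟩

/-- forward: a congruence-related pair maps to a congruence-related pair. -/
lemma fwd (Opt : α → Set α) (θ : α → α → Prop) (hθ : IsCong Opt θ)
    {p q : α} (h : bowtie Opt p q) :
    bowtie (quotOpt Opt θ) (Quot.mk θ p) (Quot.mk θ q) := by
  obtain ⟨η, hη, hpq⟩ := h
  set R : Quot θ → Quot θ → Prop :=
    fun c d => ∃ a b, η a b ∧ Quot.mk θ a = c ∧ Quot.mk θ b = d with hR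
  refine ⟨Relation.EqvGen R, ⟨Relation.EqvGen.is_equivalence R, ?_⟩,
    Relation.EqvGen.rel _ _ ⟨p, q, hpq, rfl, rfl⟩⟩
  have key : ∀ a b : α, η a b →
      clsSet (Relation.EqvGen R) (quotOpt Opt θ (Quot.mk θ a))
        = clsSet (Relation.EqvGen R) (quotOpt Opt θ (Quot.mk θ b)) := by
    intro a b hab
    have hres : ∀ x y : α, η x y →
        cls (Relation.EqvGen R) (Quot.mk θ x) = cls (Relation.EqvGen R) (Quot.mk θ y) :=
      fun x y hxy =>
        cls_eq_of_rel (Relation.EqvGen.is_equivalence R)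
          (Relation.EqvGen.rel _ _ ⟨x, y, hxy, rfl, rfl⟩)
    have hresθ : ∀ x y : α, θ x y →
        cls (Relation.EqvGen R) (Quot.mk θ x) = cls (Relation.EqvGen R) (Quot.mk θ y) :=
      fun x y hxy => by rw [Quot.sound hxy]
    have step : ∀ c : α,
        (fun x => cls (Relation.EqvGen R) (Quot.mk θ x)) '' Opt (Quot.mk θ c).out
          = (fun x => cls (Relation.EqvGen R) (Quot.mk θ x)) '' Opt c := fun c =>
      transfer hθ.1.refl hresθ (hθ.2 _ _ (out_rel θ hθ.1 c))
    show cls (Relation.EqvGen R) '' (Quot.mk θ '' Opt (Quot.mk θ a).out)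
        = cls (Relation.EqvGen R) '' (Quot.mk θ '' Opt (Quot.mk θ b).out)
    rw [Set.image_image, Set.image_image, step a, step b]
    exact transfer hη.1.refl hres (hη.2 a b hab)
  intro c d h
  induction h with
  | rel _ _ hr => obtain ⟨a, b, hab, rfl, rfl⟩ := hr; exact key a b hab
  | refl => rfl
  | symm _ _ _ ih => exact ih.symm
  | trans _ _ _ _ _ ih1 ih2 => exact ih1.trans ih2

/-- backward -/
lemma bwd (Opt : α → Set α) (θ : α → α → Prop) (hθ : IsCong Opt θ)
    {η' : Quot θ → Quot θ → Prop} (hη' : IsCong (quotOpt Opt θ) η')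
    {p0 q0 : α} (h : η' (Quot.mk θ p0) (Quot.mk θ q0)) : bowtie Opt p0 q0 := by
  have hσeq : Equivalence (fun x y : α => η' (Quot.mk θ x) (Quot.mk θ y)) :=
    ⟨fun x => hη'.1.refl _, fun h => hη'.1.symm h, fun h1 h2 => hη'.1.trans h1 h2⟩
  set σ : α → α → Prop := fun x y => η' (Quot.mk θ x) (Quot.mk θ y) with hσ
  refine ⟨σ, ⟨hσeq, ?_⟩, h⟩
  intro p q hpq
  have hresθ : ∀ x y : α, θ x y → cls σ x = cls σ y := fun x y hxy => by
    refine cls_eq_of_rel hσeq ?_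
    show η' (Quot.mk θ x) (Quot.mk θ y)
    rw [Quot.sound hxy]
    exact hη'.1.refl _
  have step : ∀ c : α, cls σ '' Opt (Quot.mk θ c).out = cls σ '' Opt c := fun c =>
    transfer hθ.1.refl hresθ (hθ.2 _ _ (out_rel θ hθ.1 c))
  have heq : (fun c : Quot θ => Quot.mk θ ⁻¹' (cls η' c)) '' (quotOpt Opt θ (Quot.mk θ p))
      = (fun c : Quot θ => Quot.mk θ ⁻¹' (cls η' c)) '' (quotOpt Opt θ (Quot.mk θ q)) :=
    transfer hη'.1.refl (fun x y hxy => by rw [cls_eq_of_rel hη'.1 hxy]) (hη'.2 _ _ hpq)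
  have h1 : ∀ c : α, cls σ '' Opt (Quot.mk θ c).out
      = (fun c : Quot θ => Quot.mk θ ⁻¹' (cls η' c)) '' (quotOpt Opt θ (Quot.mk θ c)) := by
    intro c
    show cls σ '' Opt (Quot.mk θ c).out
        = (fun c : Quot θ => Quot.mk θ ⁻¹' (cls η' c)) '' (Quot.mk θ '' Opt (Quot.mk θ c).out)
    rw [Set.image_image]
    rfl
  show cls σ '' Opt p = cls σ '' Opt q
  rw [← step p, ← step q, h1 p, h1 q, heq]

lemma eqv_out (Opt : α → Set α) (θ : α → α → Prop) (hθ : IsCong Opt θ)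
    {c d : Quot θ} (h : Relation.EqvGen (bowtie (quotOpt Opt θ)) c d) :
    Relation.EqvGen (bowtie Opt) c.out d.out := by
  induction h with
  | rel c d hr =>
    obtain ⟨η', hη', hcd⟩ := hr
    refine Relation.EqvGen.rel _ _ (bwd Opt θ hθ hη' ?_)
    rw [Quot.out_eq, Quot.out_eq]
    exact hcd
  | refl c => exact Relation.EqvGen.refl _
  | symm _ _ _ ih => exact ih.symm _ _
  | trans _ _ _ _ _ ih1 ih2 => exact ih1.trans _ _ _ ih2

end aux

theorem stmt14 {α : Type} [Nonempty α] (Opt : α → Set α)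
    (θ : α → α → Prop) (hθ : IsCong Opt θ) :
    ∃ e : Quot (bowtie Opt) ≃ Quot (bowtie (quotOpt Opt θ)),
      OptPres (quotOpt Opt (bowtie Opt))
        (quotOpt (quotOpt Opt θ) (bowtie (quotOpt Opt θ))) e ∧
      OptPres (quotOpt (quotOpt Opt θ) (bowtie (quotOpt Opt θ)))
        (quotOpt Opt (bowtie Opt)) e.symm := by
  set Opt' := quotOpt Opt θ with hOpt'
  set f : Quot (bowtie Opt) → Quot (bowtie Opt') :=
    Quot.lift (fun p => Quot.mk _ (Quot.mk θ p))
      (fun a b h => Quot.sound (fwd Opt θ hθ h)) with hf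
  set g : Quot (bowtie Opt') → Quot (bowtie Opt) :=
    Quot.lift (fun c : Quot θ => Quot.mk _ c.out)
      (fun c d h => Quot.sound (by
        obtain ⟨η', hη', hcd⟩ := h
        refine bwd Opt θ hθ hη' ?_
        rw [Quot.out_eq, Quot.out_eq]
        exact hcd)) with hg
  have hgf : ∀ x, g (f x) = x := by
    apply Quot.ind; intro a
    rw [hf, hg]
    show Quot.mk (bowtie Opt) (Quot.mk θ a).out = Quot.mk (bowtie Opt) a
    exact Quot.sound (theta_le Opt θ hθ (out_rel θ hθ.1 a))
  have hfg : ∀ y, f (g y) = y := by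
    apply Quot.ind; intro c
    rw [hf, hg]
    show Quot.mk (bowtie Opt') (Quot.mk θ c.out) = Quot.mk (bowtie Opt') c
    rw [Quot.out_eq]
  refine ⟨⟨f, g, hgf, hfg⟩, ?_, ?_⟩
  · intro p
    show Quot.mk (bowtie Opt') '' Opt' ((f p).out) = f '' (Quot.mk (bowtie Opt) '' Opt p.out)
    set v := p.out with hv
    have hfp : f p = Quot.mk (bowtie Opt') (Quot.mk θ v) := by
      conv_lhs => rw [← Quot.out_eq p]
    set C := (f p).out with hC
    have hCv : Relation.EqvGen (bowtie Opt) C.out v := by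
      have h1 : Quot.mk (bowtie Opt') C = Quot.mk (bowtie Opt') (Quot.mk θ v) := by
        rw [hC, Quot.out_eq, hfp]
      have h2 := eqv_out Opt θ hθ (Quot.eq.mp h1)
      exact h2.trans _ _ _ (Relation.EqvGen.rel _ _ (theta_le Opt θ hθ (out_rel θ hθ.1 v)))
    have himg : Quot.mk (bowtie Opt) '' Opt C.out = Quot.mk (bowtie Opt) '' Opt v :=
      mk_img_eq' Opt hCv
    have hfcomm : ∀ S : Set α, f '' (Quot.mk (bowtie Opt) '' S)
        = (fun x => Quot.mk (bowtie Opt') (Quot.mk θ x)) '' S := by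
      intro S; rw [Set.image_image, hf]
    calc Quot.mk (bowtie Opt') '' Opt' C
        = Quot.mk (bowtie Opt') '' (Quot.mk θ '' Opt C.out) := rfl
      _ = (fun x => Quot.mk (bowtie Opt') (Quot.mk θ x)) '' Opt C.out := by
          rw [Set.image_image]
      _ = f '' (Quot.mk (bowtie Opt) '' Opt C.out) := (hfcomm _).symm
      _ = f '' (Quot.mk (bowtie Opt) '' Opt v) := by rw [himg]
  · intro c
    show Quot.mk (bowtie Opt) '' Opt ((g c).out) = g '' (Quot.mk (bowtie Opt') '' Opt' c.out)
    set d := c.out with hd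
    have hgc : g c = Quot.mk (bowtie Opt) d.out := by
      conv_lhs => rw [← Quot.out_eq c]
    have hW : Relation.EqvGen (bowtie Opt) (g c).out d.out := by
      have h1 : Quot.mk (bowtie Opt) (g c).out = Quot.mk (bowtie Opt) d.out := by
        rw [Quot.out_eq, hgc]
      exact Quot.eq.mp h1
    have himg : Quot.mk (bowtie Opt) '' Opt (g c).out = Quot.mk (bowtie Opt) '' Opt d.out :=
      mk_img_eq' Opt hW
    have hgcomm : ∀ S : Set α, g '' (Quot.mk (bowtie Opt') '' (Quot.mk θ '' S))
        = Quot.mk (bowtie Opt) '' S := by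
      intro S
      rw [Set.image_image, Set.image_image, hg]
      apply Set.image_congr
      intro x _
      show Quot.mk (bowtie Opt) (Quot.mk θ x).out = Quot.mk (bowtie Opt) x
      exact Quot.sound (theta_le Opt θ hθ (out_rel θ hθ.1 x))
    calc Quot.mk (bowtie Opt) '' Opt (g c).out
        = Quot.mk (bowtie Opt) '' Opt d.out := himg
      _ = g '' (Quot.mk (bowtie Opt') '' (Quot.mk θ '' Opt d.out)) := (hgcomm _).symm
      _ = g '' (Quot.mk (bowtie Opt') '' Opt' d) := rfl
end
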